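/- arXiv:2504.19671 — 2 statements merged into one kernel-verified Lean document; each statement's English description precedes it below -/
import Mathlib

section
/- For p ≥ 3, the general position number of the Sierpiński graph S_p^2 equals (p+1)²/4 if p is odd and p(p+2)/4 if p is even. -/
open SimpleGraph

/-- A walk is a shortest path: it is a path whose length equals the graph distance. -/
def IsShortest {V : Type*} (G : SimpleGraph V) {u v : V} (p : G.Walk u v) : Prop :=
  p.IsPath ∧ p.length = G.dist u v

/-- `u` and `v` are `X`-visible: some shortest `u,v`-path meets `X` only in `{u,v}`. -/
def Visible {V : Type*} (G : SimpleGraph V) (X : Set V) (u v : V) : Prop :=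
  ∃ p : G.Walk u v, IsShortest G p ∧ ∀ w ∈ p.support, w ∈ X → w = u ∨ w = v

/-- `u` and `v` are `X`-positionable: every shortest `u,v`-path meets `X` only in `{u,v}`. -/
def Positionable {V : Type*} (G : SimpleGraph V) (X : Set V) (u v : V) : Prop :=
  ∀ p : G.Walk u v, IsShortest G p → ∀ w ∈ p.support, w ∈ X → w = u ∨ w = v

def MutualVisibilitySet {V : Type*} (G : SimpleGraph V) (X : Set V) : Prop :=
  ∀ u ∈ X, ∀ v ∈ X, Visible G X u v

def TotalMVSet {V : Type*} (G : SimpleGraph V) (X : Set V) : Prop :=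
  ∀ u v : V, Visible G X u v

def OuterMVSet {V : Type*} (G : SimpleGraph V) (X : Set V) : Prop :=
  MutualVisibilitySet G X ∧ ∀ u ∈ X, ∀ v ∉ X, Visible G X u v

def DualMVSet {V : Type*} (G : SimpleGraph V) (X : Set V) : Prop :=
  MutualVisibilitySet G X ∧ ∀ u ∉ X, ∀ v ∉ X, Visible G X u v

def GeneralPositionSet {V : Type*} (G : SimpleGraph V) (X : Set V) : Prop :=
  ∀ u ∈ X, ∀ v ∈ X, Positionable G X u v

def TotalGPSet {V : Type*} (G : SimpleGraph V) (X : Set V) : Prop :=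
  ∀ u v : V, Positionable G X u v

def OuterGPSet {V : Type*} (G : SimpleGraph V) (X : Set V) : Prop :=
  GeneralPositionSet G X ∧ ∀ u ∈ X, ∀ v ∉ X, Positionable G X u v

def DualGPSet {V : Type*} (G : SimpleGraph V) (X : Set V) : Prop :=
  GeneralPositionSet G X ∧ ∀ u ∉ X, ∀ v ∉ X, Positionable G X u v

/-- The maximum cardinality of a set of vertices satisfying `P`. -/
noncomputable def maxCard {V : Type*} (P : Set V → Prop) : ℕ :=
  sSup {n : ℕ | ∃ X : Set V, P X ∧ X.ncard = n}

/-- The number of sets achieving `maxCard P`. -/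
noncomputable def numMaxSets {V : Type*} (P : Set V → Prop) : ℕ :=
  {X : Set V | P X ∧ X.ncard = maxCard P}.ncard

/-- A vertex is simplicial if its neighborhood induces a complete graph. -/
def Simplicial {V : Type*} (G : SimpleGraph V) (v : V) : Prop :=
  ∀ u w : V, G.Adj v u → G.Adj v w → u ≠ w → G.Adj u w

/-- A set of vertices is convex: every shortest path between its vertices stays inside it. -/
def ConvexSet {V : Type*} (G : SimpleGraph V) (S : Set V) : Prop :=
  ∀ u ∈ S, ∀ v ∈ S, ∀ p : G.Walk u v, IsShortest G p → ∀ w ∈ p.support, w ∈ S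

/-- The Sierpiński graph `S_p^2` on vertex set `[p]_0 × [p]_0`:
`(i,j) ~ (i,j')` for `j ≠ j'`, and `(i,j) ~ (j,i)` for `i ≠ j`. -/
def SP2 (p : ℕ) : SimpleGraph (Fin p × Fin p) where
  Adj u v := (u.1 = v.1 ∧ u.2 ≠ v.2) ∨ (v.1 = u.2 ∧ v.2 = u.1 ∧ u.1 ≠ u.2)
  symm := ⟨by
    rintro ⟨a, b⟩ ⟨c, d⟩ (⟨h1, h2⟩ | ⟨h1, h2, h3⟩) <;> simp_all <;> tauto⟩
  loopless := ⟨by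
    rintro ⟨a, b⟩ (⟨h1, h2⟩ | ⟨h1, h2, h3⟩) <;> simp_all⟩

/-!
Two vertices `(i, j)`, `(k, l)` in different copies of `K_p` are at distance 3 unless one of them
is an end `(i, k)`, `(k, i)` of the unique edge between the two copies. For the lower bound
take `s = ⌈p/2⌉` and the vertices `(i, j)` with `i < s` and `j ≥ s` or `j = i`: any two of them
are at distance 1 or 3, so none lies strictly between two others. For the upper bound, let a general
position set `X` meet `n` copies. A copy `i` holding two vertices of `X` cannot contain the end
`(i, k)` of the edge towards another copy `k` met by `X`, since `(i, k)` lies on a geodesic from the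
vertex of `X` in copy `k` to one of the two. So every copy holds at most `p - n + 1` vertices of
`X`, and `n (p - n + 1) ≤ ⌊(p + 1)² / 4⌋`.
-/

open SimpleGraph Finset

section GeneralPosition

variable {V : Type*} {G : SimpleGraph V} {X : Set V}

lemma isShortest_of_length_le_dist {u v : V} (q : G.Walk u v) (h : q.length ≤ G.dist u v) :
    IsShortest G q :=
  have hq : q.length = G.dist u v := le_antisymm h (dist_le q)
  ⟨q.isPath_of_length_eq_dist hq, hq⟩

lemma dist_add_dist_le_length [DecidableEq V] {u v w : V} (q : G.Walk u v)
    (hw : w ∈ q.support) : G.dist u w + G.dist w v ≤ q.length := by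
  have hsplit := congrArg Walk.length (q.take_spec hw)
  rw [Walk.length_append] at hsplit
  have := dist_le (q.takeUntil w hw)
  have := dist_le (q.dropUntil w hw)
  omega

lemma generalPositionSet_of_dist_lt_add
    (h : ∀ x ∈ X, ∀ y ∈ X, ∀ z ∈ X, x ≠ y → y ≠ z →
      G.dist x z < G.dist x y + G.dist y z) :
    GeneralPositionSet G X := by
  classical
  intro u hu v hv q hq w hw hwX
  by_contra! hne
  have hle := dist_add_dist_le_length q hw
  have hlt := h u hu w hwX v hv (Ne.symm hne.1) hne.2
  rw [hq.2] at hle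
  omega

lemma GeneralPositionSet.eq_or_eq_of_mem_support (hX : GeneralPositionSet G X) {u v w : V}
    (hu : u ∈ X) (hv : v ∈ X) (q : G.Walk u v) (hq : q.length ≤ G.dist u v)
    (hw : w ∈ q.support) (hwX : w ∈ X) : w = u ∨ w = v :=
  hX u hu v hv q (isShortest_of_length_le_dist q hq) w hw hwX

end GeneralPosition

namespace SP2

variable {p : ℕ}

lemma adj_of_snd_ne {i j k : Fin p} (h : j ≠ k) : (SP2 p).Adj (i, j) (i, k) := Or.inl ⟨rfl, h⟩

lemma adj_swap {i j : Fin p} (h : i ≠ j) : (SP2 p).Adj (i, j) (j, i) := Or.inr ⟨rfl, rfl, h⟩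

def bridgeWalk {i j k l : Fin p} (hik : i ≠ k) (hjk : j ≠ k) (hli : l ≠ i) :
    (SP2 p).Walk (i, j) (k, l) :=
  .cons (adj_of_snd_ne hjk) (.cons (adj_swap hik) (.cons (adj_of_snd_ne hli.symm) .nil))

lemma dist_eq_three {i j k l : Fin p} (hik : i ≠ k) (hjk : j ≠ k) (hli : l ≠ i) :
    (SP2 p).dist (i, j) (k, l) = 3 := by
  refine le_antisymm (dist_le (bridgeWalk hik hjk hli)) ?_
  suffices (2 : ℕ∞) < (SP2 p).edist (i, j) (k, l) by
    rw [← (bridgeWalk hik hjk hli).reachable.coe_dist_eq_edist] at this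
    exact_mod_cast this
  refine two_lt_edist_iff.mpr ⟨by simp [hik], ?_, ?_⟩
  · rintro (⟨h, -⟩ | ⟨h, -, -⟩)
    exacts [hik h, hjk h.symm]
  · ext ⟨a, b⟩
    simp only [mem_commonNeighbors, SP2, Set.mem_empty_iff_false, iff_false]
    grind

def gpSet (p s : ℕ) : Finset (Fin p × Fin p) :=
  {x | x.1.val < s ∧ (s ≤ x.2.val ∨ x.2 = x.1)}

lemma mem_gpSet {s : ℕ} {x : Fin p × Fin p} :
    x ∈ gpSet p s ↔ x.1.val < s ∧ (s ≤ x.2.val ∨ x.2 = x.1) := by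
  simp [gpSet]

lemma snd_ne_fst_of_mem_gpSet {s : ℕ} {x y : Fin p × Fin p} (hx : x ∈ gpSet p s)
    (hy : y ∈ gpSet p s) (hxy : x.1 ≠ y.1) : x.2 ≠ y.1 := by
  rw [mem_gpSet] at hx hy
  rintro h
  rcases hx.2 with hx2 | hx2
  · rw [h] at hx2
    omega
  · exact hxy (hx2 ▸ h)

lemma dist_of_mem_gpSet {s : ℕ} {x y : Fin p × Fin p} (hx : x ∈ gpSet p s)
    (hy : y ∈ gpSet p s) (hxy : x ≠ y) :
    (SP2 p).dist x y = if x.1 = y.1 then 1 else 3 := by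
  split_ifs with h
  · exact dist_eq_one_iff_adj.mpr (Or.inl ⟨h, fun h2 => hxy (Prod.ext h h2)⟩)
  · exact dist_eq_three h (snd_ne_fst_of_mem_gpSet hx hy h)
      (snd_ne_fst_of_mem_gpSet hy hx (Ne.symm h))

lemma generalPositionSet_gpSet (p s : ℕ) : GeneralPositionSet (SP2 p) ↑(gpSet p s) := by
  refine generalPositionSet_of_dist_lt_add fun x hx y hy z hz hxy hyz => ?_
  rw [dist_of_mem_gpSet hx hy hxy, dist_of_mem_gpSet hy hz hyz]
  rcases eq_or_ne x z with rfl | hxz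
  · split_ifs <;> simp
  rw [dist_of_mem_gpSet hx hz hxz]
  split_ifs <;> simp_all

lemma card_gpSet {s : ℕ} (hs : s ≤ p) : #(gpSet p s) = s * (p - s + 1) := by
  set low : Finset (Fin p) := {i | i.val < s}
  have hlow : #low = s := by simp [low, Fin.card_filter_val_lt, hs]
  have hsplit : gpSet p s = low ×ˢ lowᶜ ∪ low.diag := by
    ext ⟨i, j⟩
    simp only [mem_gpSet, mem_union, mem_product, mem_compl, mem_diag, low, mem_filter,
      mem_univ, true_and]
    grind
  have hdisj : Disjoint (low ×ˢ lowᶜ) low.diag := by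
    rw [Finset.disjoint_left]
    rintro ⟨i, j⟩ hij hdiag
    rw [mem_product, mem_compl] at hij
    rw [mem_diag] at hdiag
    exact hij.2 (hdiag.2 ▸ hdiag.1)
  rw [hsplit, card_union_of_disjoint hdisj, card_product, card_compl, diag_card, hlow,
    Fintype.card_fin, Nat.mul_succ]

lemma notMem_of_two_mem_row {X : Set (Fin p × Fin p)} (hX : GeneralPositionSet (SP2 p) X)
    {i k l j₁ j₂ : Fin p} (hik : i ≠ k) (hkl : (k, l) ∈ X) (hj₁ : (i, j₁) ∈ X)
    (hj₂ : (i, j₂) ∈ X) (hj : j₁ ≠ j₂) : (i, k) ∉ X := by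
  intro hikX
  obtain ⟨j, hjX, hjk⟩ : ∃ j, (i, j) ∈ X ∧ j ≠ k := by
    by_cases h : j₁ = k
    · exact ⟨j₂, hj₂, h ▸ hj.symm⟩
    · exact ⟨j₁, hj₁, h⟩
  have hmem : (i, k) = (k, l) ∨ (i, k) = (i, j) := by
    by_cases hli : l = i
    · rw [hli] at hkl ⊢
      let q : (SP2 p).Walk (k, i) (i, j) :=
        .cons (adj_swap hik.symm) (.cons (adj_of_snd_ne hjk.symm) .nil)
      refine hX.eq_or_eq_of_mem_support hkl hjX q ?_ (by simp [q]) hikX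
      refine q.reachable.one_lt_dist_of_ne_of_not_adj (by simp [hik.symm]) ?_
      rintro (⟨h, -⟩ | ⟨-, h, -⟩)
      exacts [hik h.symm, hjk h]
    · exact hX.eq_or_eq_of_mem_support hkl hjX (bridgeWalk hik.symm hli hjk)
        (dist_eq_three hik.symm hli hjk).ge (by simp [bridgeWalk]) hikX
  rcases hmem with h | h
  · exact hik (congrArg Prod.fst h)
  · exact hjk (congrArg Prod.snd h).symm

lemma card_row_le {X : Finset (Fin p × Fin p)} (hX : GeneralPositionSet (SP2 p) ↑X)
    (i : Fin p) : #{x ∈ X | x.1 = i} ≤ p - #(X.image Prod.fst) + 1 := by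
  by_cases hsmall : #{x ∈ X | x.1 = i} ≤ 1
  · omega
  obtain ⟨x, hx, y, hy, hxy⟩ := one_lt_card.mp (not_le.mp hsmall)
  rw [mem_filter] at hx hy
  have hxX : (i, x.2) ∈ X := hx.2 ▸ hx.1
  have hyX : (i, y.2) ∈ X := hy.2 ▸ hy.1
  have hj : x.2 ≠ y.2 := fun h => hxy (Prod.ext (hx.2.trans hy.2.symm) h)
  have hsub : {x ∈ X | x.1 = i}.image Prod.snd ⊆ insert i (X.image Prod.fst)ᶜ := by
    simp only [subset_iff, mem_image, mem_filter, mem_insert, mem_compl]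
    rintro _ ⟨⟨_, k⟩, ⟨hk, rfl⟩, rfl⟩
    by_contra! h
    obtain ⟨⟨_, l⟩, hl, rfl⟩ := h.2
    exact notMem_of_two_mem_row hX (Ne.symm h.1) hl hxX hyX hj hk
  have hinj : Set.InjOn Prod.snd (↑{x ∈ X | x.1 = i} : Set (Fin p × Fin p)) := by
    rintro ⟨_, _⟩ hx ⟨_, _⟩ hy h
    simp_all
  calc #{x ∈ X | x.1 = i}
      = #({x ∈ X | x.1 = i}.image Prod.snd) := (card_image_of_injOn hinj).symm
    _ ≤ #(insert i (X.image Prod.fst)ᶜ) := card_le_card hsub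
    _ ≤ #(X.image Prod.fst)ᶜ + 1 := card_insert_le _ _
    _ = p - #(X.image Prod.fst) + 1 := by rw [card_compl, Fintype.card_fin]

lemma card_le_of_generalPositionSet {X : Finset (Fin p × Fin p)}
    (hX : GeneralPositionSet (SP2 p) ↑X) : ∃ n ≤ p, #X ≤ n * (p - n + 1) := by
  refine ⟨#(X.image Prod.fst), card_le_univ _ |>.trans_eq (Fintype.card_fin p), ?_⟩
  rw [card_eq_sum_card_image Prod.fst X]
  exact sum_le_card_nsmul _ _ _ fun i _ => card_row_le hX i

end SP2

lemma mul_sub_add_one_le {n p : ℕ} (h : n ≤ p) : n * (p - n + 1) ≤ (p + 1) ^ 2 / 4 := by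
  obtain ⟨m, rfl⟩ := Nat.exists_eq_add_of_le h
  rw [Nat.le_div_iff_mul_le (by norm_num), show n + m - n + 1 = m + 1 by omega]
  nlinarith [sq_nonneg ((n : ℤ) - (m + 1))]

lemma half_mul_sub_half_add_one (p : ℕ) :
    (p + 1) / 2 * (p - (p + 1) / 2 + 1) = (p + 1) ^ 2 / 4 := by
  rcases Nat.even_or_odd' p with ⟨k, rfl | rfl⟩
  · rw [show (2 * k + 1) / 2 = k by omega, show 2 * k - k + 1 = k + 1 by omega,
      show (2 * k + 1) ^ 2 = 1 + 4 * (k * (k + 1)) by ring,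
      Nat.add_mul_div_left _ _ (by norm_num)]
    simp
  · rw [show (2 * k + 1 + 1) / 2 = k + 1 by omega, show 2 * k + 1 - (k + 1) + 1 = k + 1 by omega,
      show (2 * k + 1 + 1) ^ 2 = 4 * ((k + 1) * (k + 1)) by ring,
      Nat.mul_div_cancel_left _ (by norm_num)]

lemma ite_odd_eq_succ_sq_div_four (p : ℕ) :
    (if Odd p then (p + 1) ^ 2 / 4 else p * (p + 2) / 4) = (p + 1) ^ 2 / 4 := by
  split_ifs with hp
  · rfl
  · obtain ⟨k, rfl⟩ := Nat.not_odd_iff_even.mp hp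
    rw [show (k + k) * (k + k + 2) = 4 * (k * (k + 1)) by ring,
      show (k + k + 1) ^ 2 = 1 + 4 * (k * (k + 1)) by ring,
      Nat.add_mul_div_left _ _ (by norm_num), Nat.mul_div_cancel_left _ (by norm_num)]
    simp

theorem stmt_7_general (p : ℕ) :
    maxCard (GeneralPositionSet (SP2 p)) =
      if Odd p then (p + 1) ^ 2 / 4 else p * (p + 2) / 4 := by
  rw [ite_odd_eq_succ_sq_div_four, maxCard]
  refine IsGreatest.csSup_eq ⟨⟨_, SP2.generalPositionSet_gpSet p ((p + 1) / 2), ?_⟩, ?_⟩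
  · rw [Set.ncard_coe_finset, SP2.card_gpSet (by omega), half_mul_sub_half_add_one]
  · classical
    rintro _ ⟨X, hX, rfl⟩
    obtain ⟨n, hn, hcard⟩ :=
      SP2.card_le_of_generalPositionSet (X := X.toFinset) (by simpa using hX)
    rw [Set.ncard_eq_toFinset_card']
    exact hcard.trans (mul_sub_add_one_le hn)

/-- The general position number of `S_p^2`. -/
theorem stmt_7 (p : ℕ) (hp : 3 ≤ p) :
    maxCard (GeneralPositionSet (SP2 p)) =
      if Odd p then (p + 1) ^ 2 / 4 else p * (p + 2) / 4 :=
  stmt_7_general p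
end

section
/- For p ≥ 3, the dual general position number of the Sierpiński graph S_p^2 equals p, and the diagonal {(i,i) : i ∈ [p]_0} is the unique maximum dual general position set. -/
open SimpleGraph

/-! In `S_p^2` the distance between different blocks `i ≠ i'` is `1 + [j ≠ i'] + [j' ≠ i]`, and
at most one inside a block. So `X` is a dual general position set exactly when no vertex of `X`
lies strictly between (in the metric sense) two vertices that are both in or both outside `X`,
which is an arithmetic condition. A diagonal vertex `(m, m)` is at distance at least two from
every vertex outside block `m`, and this makes the diagonal a dual general position set.
Conversely, if `(a, b) ∈ X` with `a ≠ b`, then `(b, a) ∈ X`: otherwise the whole block `a` lies in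
`X`, no `(e, a)` with `e ≠ a` does, and `(a, b')` lies between `(b', a)` and `(c', a)`. With
`(a, b), (b, a) ∈ X`, a third index `c` gives a vertex of `X` between two vertices on the same
side of `X`. So every dual general position set lies in the diagonal.
-/

namespace SimpleGraph

variable {V : Type*} {G : SimpleGraph V}

section Descent

variable {f : V → V → ℕ}

theorem exists_walk_length_eq_of_descent (hzero : ∀ v, f v v = 0)
    (hdesc : ∀ u v, u ≠ v → ∃ w, G.Adj u w ∧ f w v + 1 = f u v) (u v : V) : ∃ q : G.Walk u v, q.length = f u v := by
  induction hn : f u v using Nat.strong_induction_on generalizing u with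
  | _ n ih =>
    by_cases huv : u = v
    · subst huv
      exact ⟨.nil, by simp [← hn, hzero]⟩
    · obtain ⟨w, hadj, hw⟩ := hdesc u v huv
      obtain ⟨q, hq⟩ := ih (f w v) (by omega) w rfl
      exact ⟨.cons hadj q, by simp [hq, ← hn, ← hw]⟩

theorem le_length_of_adj_le (hzero : ∀ v, f v v = 0)
    (hlip : ∀ u w v, G.Adj u w → f u v ≤ f w v + 1) {u v : V} (q : G.Walk u v) :
    f u v ≤ q.length := by
  induction q with
  | nil => simp [hzero]
  | cons hadj q ih => simpa using (hlip _ _ _ hadj).trans (by omega)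

theorem dist_eq_of_descent (hzero : ∀ v, f v v = 0)
    (hlip : ∀ u w v, G.Adj u w → f u v ≤ f w v + 1)
    (hdesc : ∀ u v, u ≠ v → ∃ w, G.Adj u w ∧ f w v + 1 = f u v) (u v : V) :
    G.dist u v = f u v := by
  obtain ⟨q, hq⟩ := exists_walk_length_eq_of_descent hzero hdesc u v
  obtain ⟨r, hr⟩ := q.reachable.exists_walk_length_eq_dist
  exact le_antisymm (hq ▸ dist_le q) (hr ▸ le_length_of_adj_le hzero hlip r)

end Descent

theorem IsShortest.dist_add_dist_eq [DecidableEq V] {u v w : V} {q : G.Walk u v}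
    (hq : IsShortest G q) (hw : w ∈ q.support) :
    G.dist u w + G.dist w v = G.dist u v := by
  refine le_antisymm ?_ ((q.takeUntil w hw).reachable.dist_triangle_left v)
  calc G.dist u w + G.dist w v
      ≤ (q.takeUntil w hw).length + (q.dropUntil w hw).length := add_le_add (dist_le _) (dist_le _)
    _ = G.dist u v := by rw [← Walk.length_append, Walk.take_spec, hq.2]

theorem positionable_iff (hG : G.Preconnected) {X : Set V} {u v : V} :
    Positionable G X u v ↔
      ∀ w ∈ X, G.dist u w + G.dist w v = G.dist u v → w = u ∨ w = v := by
  classical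
  constructor
  · intro hpos w hwX hw
    obtain ⟨a, ha⟩ := (hG u w).exists_walk_length_eq_dist
    obtain ⟨b, hb⟩ := (hG w v).exists_walk_length_eq_dist
    have hlen : (a.append b).length = G.dist u v := by rw [Walk.length_append, ha, hb, hw]
    exact hpos (a.append b) ⟨(a.append b).isPath_of_length_eq_dist hlen, hlen⟩ w
      ((Walk.mem_support_append_iff a b).mpr (Or.inl a.end_mem_support)) hwX
  · intro h q hq w hw hwX
    exact h w hwX (hq.dist_add_dist_eq hw)

theorem dualGPSet_iff (hG : G.Preconnected) {X : Set V} :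
    DualGPSet G X ↔ ∀ u v, (u ∈ X ↔ v ∈ X) →
      ∀ w ∈ X, G.dist u w + G.dist w v = G.dist u v → w = u ∨ w = v := by
  simp only [DualGPSet, GeneralPositionSet, positionable_iff hG]
  constructor
  · rintro ⟨hin, hout⟩ u v huv
    by_cases hu : u ∈ X
    · exact hin u hu v (huv.mp hu)
    · exact hout u hu v (mt huv.mpr hu)
  · intro h
    exact ⟨fun u hu v hv => h u v (iff_of_true hu hv), fun u hu v hv => h u v (iff_of_false hu hv)⟩

end SimpleGraph

theorem maxCard_eq_ncard_of_forall_subset {V : Type*} {P : Set V → Prop} {D : Set V}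
    (hD : P D) (hfin : D.Finite) (hsub : ∀ X, P X → X ⊆ D) : maxCard P = D.ncard := by
  refine IsGreatest.csSup_eq ⟨⟨D, hD, rfl⟩, ?_⟩
  rintro n ⟨X, hX, rfl⟩
  exact Set.ncard_le_ncard (hsub X hX) hfin

theorem setOf_ncard_eq_eq_singleton_of_forall_subset {V : Type*} {P : Set V → Prop}
    {D : Set V} (hD : P D) (hfin : D.Finite) (hsub : ∀ X, P X → X ⊆ D) :
    {X | P X ∧ X.ncard = D.ncard} = {D} := by
  ext X
  constructor
  · rintro ⟨hX, hcard⟩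
    exact Set.eq_of_subset_of_ncard_le (hsub X hX) hcard.ge hfin
  · rintro rfl
    exact ⟨hD, rfl⟩

namespace SP2

open SimpleGraph

variable {p : ℕ}

/-- Inside a block the distance is at most one; otherwise a shortest path moves inside the block
of `u` to the vertex `(u.1, v.1)`, crosses the bridge to `(v.1, u.1)` and moves on to `v`. -/
def dist' (u v : Fin p × Fin p) : ℕ :=
  if u.1 = v.1 then (if u.2 = v.2 then 0 else 1)
  else 1 + (if u.2 = v.1 then 0 else 1) + (if v.2 = u.1 then 0 else 1)

theorem dist'_le_dist'_add_one {u w : Fin p × Fin p} (h : (SP2 p).Adj u w) (v : Fin p × Fin p) :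
    dist' u v ≤ dist' w v + 1 := by
  rcases h with h | h <;> grind [dist']

theorem exists_adj_dist'_add_one {u v : Fin p × Fin p} (h : u ≠ v) :
    ∃ w, (SP2 p).Adj u w ∧ dist' w v + 1 = dist' u v := by
  obtain ⟨i, j⟩ := u
  obtain ⟨i', j'⟩ := v
  by_cases hi : i = i'
  · subst hi
    exact ⟨(i, j'), Or.inl ⟨rfl, by simpa using h⟩, by grind [dist']⟩
  by_cases hj : j = i'
  · subst hj
    exact ⟨(j, i), Or.inr ⟨rfl, rfl, hi⟩, by grind [dist']⟩
  · exact ⟨(i, i'), Or.inl ⟨rfl, hj⟩, by grind [dist']⟩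

theorem dist_eq (u v : Fin p × Fin p) : (SP2 p).dist u v = dist' u v :=
  dist_eq_of_descent (f := dist') (by simp [dist']) (fun _ _ _ h => dist'_le_dist'_add_one h _)
    (fun _ _ h => exists_adj_dist'_add_one h) u v

theorem preconnected : (SP2 p).Preconnected := fun u v =>
  (exists_walk_length_eq_of_descent (f := dist') (by simp [dist'])
    (fun _ _ h => exists_adj_dist'_add_one h) u v).elim fun q _ => q.reachable

theorem dualGPSet_iff {X : Set (Fin p × Fin p)} :
    DualGPSet (SP2 p) X ↔ ∀ u v, (u ∈ X ↔ v ∈ X) →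
      ∀ w ∈ X, dist' u w + dist' w v = dist' u v → w = u ∨ w = v := by
  simp only [SimpleGraph.dualGPSet_iff preconnected, dist_eq]

theorem dualGPSet_diagonal : DualGPSet (SP2 p) {v | v.1 = v.2} := by
  rw [dualGPSet_iff]
  rintro u v huv w hw h
  simp only [Set.mem_ofPred_eq] at huv hw
  grind [dist']

theorem exists_ne_ne (hp : 3 ≤ p) (a b : Fin p) : ∃ c, c ≠ a ∧ c ≠ b := by
  obtain ⟨c, -, hc⟩ := Finset.exists_mem_notMem_of_card_lt_card
    (s := {a, b}) (t := Finset.univ) (by simpa using (Finset.card_le_two).trans_lt (by omega))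
  exact ⟨c, by simp_all⟩

section DualGPSet

variable {X : Set (Fin p × Fin p)} (hX : DualGPSet (SP2 p) X)
include hX

theorem swap_mem_of_dualGPSet (hp : 3 ≤ p) {a b : Fin p} (hab : a ≠ b) (h : (a, b) ∈ X) :
    (b, a) ∈ X := by
  rw [dualGPSet_iff] at hX
  by_contra hba
  have hrow : ∀ c, (a, c) ∈ X := by
    intro c
    by_contra hac
    have := hX (a, c) (b, a) (iff_of_false hac hba) (a, b) h (by grind [dist'])
    grind
  have hcol : ∀ e, e ≠ a → (e, a) ∉ X := by
    intro e hea hea'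
    have := hX (e, a) (a, a) (iff_of_true hea' (hrow a)) (a, e) (hrow e)
      (by grind [dist'])
    grind
  obtain ⟨b', hb'⟩ := exists_ne_ne hp a a
  obtain ⟨c', hc'a, hc'b'⟩ := exists_ne_ne hp a b'
  have := hX (b', a) (c', a) (iff_of_false (hcol b' hb'.1) (hcol c' hc'a)) (a, b') (hrow b')
    (by grind [dist'])
  grind

theorem not_mem_of_mem_of_swap_mem {a b c : Fin p} (hca : c ≠ a) (hcb : c ≠ b)
    (h : (a, b) ∈ X) (hc : (c, a) ∈ X) : (a, c) ∉ X := by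
  rw [dualGPSet_iff] at hX
  intro hac
  have := hX (c, a) (a, b) (iff_of_true hc h) (a, c) hac (by grind [dist'])
  grind

theorem subset_diagonal_of_dualGPSet (hp : 3 ≤ p) : X ⊆ {v | v.1 = v.2} := by
  rintro ⟨a, b⟩ h
  by_contra hab
  have hba := swap_mem_of_dualGPSet hX hp hab h
  obtain ⟨c, hca, hcb⟩ := exists_ne_ne hp a b
  have hac : (a, c) ∉ X := fun hac =>
    not_mem_of_mem_of_swap_mem hX hca hcb h (swap_mem_of_dualGPSet hX hp hca.symm hac) hac
  have hbc : (b, c) ∉ X := fun hbc =>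
    not_mem_of_mem_of_swap_mem hX hcb hca hba
      (swap_mem_of_dualGPSet hX hp hcb.symm hbc) hbc
  rw [dualGPSet_iff] at hX
  have := hX (a, c) (b, c) (iff_of_false hac hbc) (a, b) h (by grind [dist'])
  grind

end DualGPSet

theorem ncard_diagonal : {v : Fin p × Fin p | v.1 = v.2}.ncard = p := by
  have : {v : Fin p × Fin p | v.1 = v.2} = Set.range fun i => (i, i) := by
    ext ⟨a, b⟩
    simp [eq_comm]
  rw [this, Set.ncard_range_of_injective fun _ _ h => congrArg Prod.fst h, Nat.card_eq_fintype_card,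
    Fintype.card_fin]

end SP2

/-- `gp_d(S_p^2) = p`, and the diagonal is the unique maximum dual general position set. -/
theorem stmt_9 (p : ℕ) (hp : 3 ≤ p) :
    maxCard (DualGPSet (SP2 p)) = p ∧
    {X : Set (Fin p × Fin p) | DualGPSet (SP2 p) X ∧ X.ncard = p} =
      {{v : Fin p × Fin p | v.1 = v.2}} := by
  have hsub : ∀ X, DualGPSet (SP2 p) X → X ⊆ {v | v.1 = v.2} :=
    fun X hX => SP2.subset_diagonal_of_dualGPSet hX hp
  have hfin := Set.toFinite {v : Fin p × Fin p | v.1 = v.2}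
  have hmax := maxCard_eq_ncard_of_forall_subset SP2.dualGPSet_diagonal hfin hsub
  have huniq := setOf_ncard_eq_eq_singleton_of_forall_subset SP2.dualGPSet_diagonal hfin hsub
  rw [SP2.ncard_diagonal] at hmax huniq
  exact ⟨hmax, huniq⟩
end
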